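/- Let p and p+2 both be odd primes and N = p(p+2). Let s be a binary sequence of period N whose support set is an (N, (N+1)/2, (N+1)/4) cyclic difference set, with circulant matrix A. Then gcd(2^N - 1, det(A)) = 1, and hence the 2-adic complexity of s equals N. -/

import Mathlib

/-!
With `A = circulant s`, the difference-set property gives `A Aᵀ = c (I + J)` with
`c = ((p + 1) / 2)²`, hence `det A ² = c ^ N (N + 1) = c ^ N (p + 1)²`, so every prime factor of
`det A` divides `p + 1`. For a prime `q ∣ 2 ^ N - 1`, the multiplicative order of `2` modulo `q`
is a nontrivial divisor of both `N = p (p + 2)` and `q - 1`, so `q > p`; since `p + 1` is even,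
`q ∤ p + 1`.

For the `2`-adic complexity: if a prime `q` divides both `S(2) = ∑ sᵢ 2ⁱ` and `2 ^ N - 1`, then
over `ZMod q` the vector `(2 ^ (-j))_j` is an eigenvector of `A` with eigenvalue `S(2) = 0`,
so `q ∣ det A`.
-/

open Matrix Finset

theorem Nat.minFac_lt_of_two_pow_eq_one {q N : ℕ} [Fact q.Prime] (hN : N ≠ 0)
    (h : (2 : ZMod q) ^ N = 1) : N.minFac < q := by
  have h2 : (2 : ZMod q) ≠ 0 := by
    rintro h0
    simp [h0, zero_pow hN] at h
  have hdvd : orderOf (2 : ZMod q) ∣ N := orderOf_dvd_of_pow_eq_one h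
  have hone : orderOf (2 : ZMod q) ≠ 1 := by
    rw [Ne, orderOf_eq_one_iff]
    intro h21
    exact one_ne_zero (by linear_combination h21 : (1 : ZMod q) = 0)
  have hpos : orderOf (2 : ZMod q) ≠ 0 := fun h0 => hN (Nat.eq_zero_of_zero_dvd (h0 ▸ hdvd))
  have hq := (Fact.out : q.Prime).two_le
  calc N.minFac ≤ orderOf (2 : ZMod q) := Nat.minFac_le_of_dvd (by omega) hdvd
    _ ≤ q - 1 := Nat.le_of_dvd (by omega) (ZMod.orderOf_dvd_card_sub_one h2)
    _ < q := by omega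

theorem not_dvd_add_one_of_dvd_two_pow_sub_one {p q : ℕ} (hp : p.Prime) (hp2 : (p + 2).Prime)
    (hodd : Odd p) (hq : q.Prime) (h : (q : ℤ) ∣ 2 ^ (p * (p + 2)) - 1) : ¬ q ∣ p + 1 := by
  have := Fact.mk hq
  have h2 : (2 : ZMod q) ^ (p * (p + 2)) = 1 := by
    simpa using ((ZMod.intCast_eq_intCast_iff_dvd_sub 1 _ q).mpr h).symm
  have hr := Nat.minFac_prime (n := p * (p + 2)) (by nlinarith [hp.two_le])
  have hpr : p ≤ (p * (p + 2)).minFac := by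
    rcases hr.dvd_mul.mp (Nat.minFac_dvd _) with h' | h'
    · exact ((Nat.prime_dvd_prime_iff_eq hr hp).mp h').ge
    · exact ((Nat.prime_dvd_prime_iff_eq hr hp2).mp h').ge.trans' (by omega)
  have hpq : p < q :=
    hpr.trans_lt (Nat.minFac_lt_of_two_pow_eq_one (Nat.mul_ne_zero hp.ne_zero (by omega)) h2)
  intro hdvd
  have hqp : q = p + 1 := le_antisymm (Nat.le_of_dvd (by omega) hdvd) hpq
  have := hq.even_iff.mp (hqp ▸ hodd.add_one)
  have := hp.two_le
  omega

theorem Int.gcd_eq_one_of_forall_prime_dvd {a b : ℤ}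
    (h : ∀ q : ℕ, q.Prime → (q : ℤ) ∣ a → ¬ (q : ℤ) ∣ b) : Int.gcd a b = 1 :=
  Nat.coprime_of_dvd fun q hq ha hb => h q hq (Int.natCast_dvd.2 ha) (Int.natCast_dvd.2 hb)

theorem ZMod.sum_range_eq_sum_val {M : Type*} [AddCommMonoid M] {N : ℕ} [NeZero N]
    (f : ℕ → M) : ∑ i ∈ range N, f i = ∑ i : ZMod N, f i.val := by
  refine Finset.sum_nbij' (↑) ZMod.val ?_ ?_ ?_ ?_ ?_ <;>
    simp +contextual [ZMod.val_lt, Nat.mod_eq_of_lt]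

theorem pow_zmod_val_add {M : Type*} [Monoid M] {N : ℕ} [NeZero N] {x : M} (hx : x ^ N = 1)
    (a b : ZMod N) : x ^ (a + b).val = x ^ a.val * x ^ b.val := by
  rw [ZMod.val_add, ← pow_eq_pow_mod _ hx, pow_add]

theorem sum_mul_sub_eq_card_inter {N : ℕ} [NeZero N] (s : ZMod N → ℤ)
    (hbin : ∀ i, s i = 0 ∨ s i = 1) (τ : ZMod N) :
    ∑ k, s k * s (k - τ) =
      ((univ.filter fun i => s i = 1) ∩ (univ.filter fun i => s i = 1).image (· + τ)).card := by
  have hind : ∀ k, s k * s (k - τ) = if s k = 1 ∧ s (k - τ) = 1 then 1 else 0 := fun k => by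
    rcases hbin k with h | h <;> rcases hbin (k - τ) with h' | h' <;> simp [h, h']
  rw [Finset.sum_congr rfl fun k _ => hind k, Finset.sum_boole]
  congr 2
  ext k
  simp [sub_eq_add_neg]

namespace Matrix

theorem circulant_mulVec_pow_neg_val {R : Type*} [CommRing R] {N : ℕ} [NeZero N]
    (v : ZMod N → R) {x : R} (hx : x ^ N = 1) :
    circulant v *ᵥ (fun j => x ^ (-j).val) = (∑ k, v k * x ^ k.val) • fun j => x ^ (-j).val := by
  funext i
  simp only [mulVec, dotProduct, circulant_apply, Pi.smul_apply, smul_eq_mul, Finset.sum_mul]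
  refine Fintype.sum_equiv (Equiv.subLeft i) _ _ fun j => ?_
  rw [Equiv.subLeft_apply, mul_assoc, ← pow_zmod_val_add hx, show i - j + -i = -j by abel]

theorem det_circulant_eq_zero_of_sum_pow_eq_zero {K : Type*} [Field K] {N : ℕ} [NeZero N]
    (v : ZMod N → K) {x : K} (hx : x ^ N = 1) (h : ∑ k, v k * x ^ k.val = 0) :
    (circulant v).det = 0 := by
  refine exists_mulVec_eq_zero_iff.mp ⟨fun j => x ^ (-j).val, fun h0 => ?_, ?_⟩
  · simpa using congrFun h0 0
  · rw [circulant_mulVec_pow_neg_val v hx, h, zero_smul]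

theorem prime_dvd_det_circulant {N q : ℕ} [NeZero N] (hq : q.Prime) (s : ZMod N → ℤ)
    {a : ℤ} (ha : (q : ℤ) ∣ a ^ N - 1)
    (hs : (q : ℤ) ∣ ∑ i ∈ Finset.range N, s (i : ZMod N) * a ^ i) :
    (q : ℤ) ∣ (circulant s).det := by
  have := Fact.mk hq
  rw [← ZMod.intCast_eq_intCast_iff_dvd_sub, Int.cast_one] at ha
  rw [← ZMod.intCast_zmod_eq_zero_iff_dvd] at hs ⊢
  rw [Int.cast_det, map_circulant]
  push_cast at ha hs
  simp only [ZMod.sum_range_eq_sum_val, ZMod.natCast_zmod_val] at hs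
  exact det_circulant_eq_zero_of_sum_pow_eq_zero _ ha.symm hs

theorem circulant_mul_transpose {R : Type*} [CommRing R] {N : ℕ} [NeZero N] (s : ZMod N → R) :
    circulant s * (circulant s)ᵀ = circulant fun τ => ∑ k, s k * s (k - τ) := by
  rw [transpose_circulant, circulant_mul]
  congr 1
  funext τ
  simp only [mulVec, dotProduct, circulant_apply]
  refine Fintype.sum_equiv (Equiv.subLeft τ) _ _ fun j => ?_
  rw [Equiv.subLeft_apply, sub_sub_cancel_left]

theorem circulant_mul_transpose_of_difference_set {N : ℕ} [NeZero N] (s : ZMod N → ℤ)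
    (hbin : ∀ i, s i = 0 ∨ s i = 1) {k l : ℕ}
    (hcard : (univ.filter fun i => s i = 1).card = k)
    (hdiff : ∀ τ : ZMod N, τ ≠ 0 →
      ((univ.filter fun i => s i = 1) ∩ (univ.filter fun i => s i = 1).image (· + τ)).card = l) :
    circulant s * (circulant s)ᵀ =
      ((k : ℤ) - l) • (1 : Matrix (ZMod N) (ZMod N) ℤ) + (l : ℤ) • of fun _ _ => 1 := by
  ext i j
  rw [circulant_mul_transpose, circulant_apply, sum_mul_sub_eq_card_inter s hbin]
  by_cases hij : i = j
  · subst hij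
    simp only [Matrix.add_apply, Matrix.smul_apply, one_apply_eq, of_apply, sub_self]
    simp [hcard]
  · rw [hdiff _ (sub_ne_zero_of_ne hij)]
    simp only [Matrix.add_apply, Matrix.smul_apply, one_apply_ne hij, of_apply]
    simp

theorem det_smul_one_add_ones {n R : Type*} [Fintype n] [DecidableEq n] [CommRing R] (c : R) :
    (c • (1 + of fun _ _ : n => (1 : R))).det = c ^ Fintype.card n * (Fintype.card n + 1) := by
  have hJ : (of fun _ _ : n => (1 : R)) =
      replicateCol Unit (fun _ : n => (1 : R)) * replicateRow Unit (fun _ : n => (1 : R)) := by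
    ext i j
    simp [mul_apply]
  rw [det_smul, hJ, det_one_add_replicateCol_mul_replicateRow]
  simp [dotProduct, add_comm]

theorem det_circulant_sq_of_difference_set {N : ℕ} [NeZero N] (s : ZMod N → ℤ)
    (hbin : ∀ i, s i = 0 ∨ s i = 1) {c : ℕ}
    (hcard : (univ.filter fun i => s i = 1).card = 2 * c)
    (hdiff : ∀ τ : ZMod N, τ ≠ 0 →
      ((univ.filter fun i => s i = 1) ∩ (univ.filter fun i => s i = 1).image (· + τ)).card = c) :
    (circulant s).det ^ 2 = (c : ℤ) ^ N * (N + 1) := by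
  have h := congrArg det (circulant_mul_transpose_of_difference_set s hbin hcard hdiff)
  rw [show ((2 * c : ℕ) : ℤ) - c = c by push_cast; ring, ← smul_add, det_mul, det_transpose,
    det_smul_one_add_ones, ZMod.card] at h
  rw [sq, h]

end Matrix

theorem stmt8 (p N : ℕ) (hp : p.Prime) (hp2 : (p + 2).Prime) (hodd : Odd p)
    (hN : N = p * (p + 2)) [NeZero N]
    (s : ZMod N → ℤ) (hbin : ∀ i, s i = 0 ∨ s i = 1)
    (hcard : (Finset.univ.filter fun i : ZMod N => s i = 1).card = (N + 1) / 2)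
    (hdiff : ∀ τ : ZMod N, τ ≠ 0 →
      ((Finset.univ.filter fun i : ZMod N => s i = 1) ∩
        ((Finset.univ.filter fun i : ZMod N => s i = 1)).image (· + τ)).card = (N + 1) / 4) :
    Int.gcd (2 ^ N - 1) (Matrix.circulant s).det = 1 ∧
    Int.gcd (∑ i ∈ Finset.range N, s (i : ZMod N) * 2 ^ i) (2 ^ N - 1) = 1 := by
  obtain ⟨m, hm⟩ : Even (p + 1) := hodd.add_one
  have hN1 : N + 1 = 4 * m ^ 2 := by rw [hN]; nlinarith
  rw [show (N + 1) / 2 = 2 * m ^ 2 by omega] at hcard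
  rw [show (N + 1) / 4 = m ^ 2 by omega] at hdiff
  have hdet : (circulant s).det ^ 2 = (m ^ 2 : ℤ) ^ N * (2 * m) ^ 2 := by
    rw [det_circulant_sq_of_difference_set s hbin hcard hdiff, Nat.cast_pow]
    congr 1
    exact_mod_cast (by rw [hN1]; ring : N + 1 = (2 * m) ^ 2)
  have hprime : ∀ q : ℕ, q.Prime → (q : ℤ) ∣ 2 ^ N - 1 → ¬ (q : ℤ) ∣ (circulant s).det := by
    intro q hq h2N hqdet
    refine not_dvd_add_one_of_dvd_two_pow_sub_one hp hp2 hodd hq (hN ▸ h2N) ?_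
    have hq' := Nat.prime_iff_prime_int.mp hq
    have hq2m : (q : ℤ) ∣ 2 * m := by
      rcases hq'.dvd_or_dvd (hdet ▸ dvd_pow hqdet two_ne_zero) with h | h
      · exact (hq'.dvd_of_dvd_pow (hq'.dvd_of_dvd_pow h)).mul_left 2
      · exact hq'.dvd_of_dvd_pow h
    rw [show p + 1 = 2 * m by omega]
    exact_mod_cast hq2m
  exact ⟨Int.gcd_eq_one_of_forall_prime_dvd hprime, Int.gcd_eq_one_of_forall_prime_dvd
    fun q hq hS h2N => hprime q hq h2N (prime_dvd_det_circulant hq s h2N hS)⟩
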